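/- Every split butterfly between two crossed modules C1 = [N1 → M1] and C2 = [N2 → M2] corresponds to a unique strict morphism (f1, f2) : C1 → C2, where the middle group of the butterfly is the semidirect product N2 ⋊ M1 with multiplication (n,m)·(n',m') = (n · {}^{f1(m)}n', m·m'), and conversely every strict morphism gives rise to a split butterfly. -/
import Mathlib


/-- A crossed module `[N → M]`: a group homomorphism `h : N →* M` together with an action of
`M` on `N` by automorphisms, satisfying the Peiffer identities. -/
structure CrossedModule (N M : Type*) [Group N] [Group M] where
  act : M →* MulAut N
  h : N →* M
  peiffer₁ : ∀ (m : M) (n : N), h (act m n) = m * h n * m⁻¹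
  peiffer₂ : ∀ (n n' : N), act (h n) n' = n * n' * n⁻¹

/-- A strict morphism of crossed modules: a pair of group homomorphisms compatible with the
structure maps and the actions. -/
structure StrictMorphism {N₁ M₁ N₂ M₂ : Type*} [Group N₁] [Group M₁] [Group N₂] [Group M₂]
    (C₁ : CrossedModule N₁ M₁) (C₂ : CrossedModule N₂ M₂) where
  f₁ : M₁ →* M₂
  f₂ : N₁ →* N₂
  comm : ∀ n : N₁, C₂.h (f₂ n) = f₁ (C₁.h n)
  equivar : ∀ (m : M₁) (n : N₁), f₂ (C₁.act m n) = C₂.act (f₁ m) (f₂ n)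

/-- A butterfly from `C₁ = [N₁ → M₁]` to `C₂ = [N₂ → M₂]` with middle group `E`: both diagonal
sequences are complexes, the NE–SW sequence `N₂ → E → M₁` is a group extension, and the two
equivariance conditions hold. -/
structure Butterfly {N₁ M₁ N₂ M₂ : Type*} [Group N₁] [Group M₁] [Group N₂] [Group M₂]
    (C₁ : CrossedModule N₁ M₁) (C₂ : CrossedModule N₂ M₂) (E : Type*) [Group E] where
  f : N₁ →* E
  g : E →* M₁
  k : N₂ →* E
  t : E →* M₂
  comm_g_f : ∀ n : N₁, g (f n) = C₁.h n
  comm_t_k : ∀ n : N₂, t (k n) = C₂.h n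
  complex_NWSE : ∀ n : N₁, t (f n) = 1
  k_inj : Function.Injective k
  g_surj : Function.Surjective g
  ex : ∀ x : E, g x = 1 ↔ x ∈ k.range
  equivar_t : ∀ (x : E) (n : N₂), k (C₂.act (t x) n) = x * k n * x⁻¹
  equivar_g : ∀ (x : E) (n : N₁), f (C₁.act (g x) n) = x * f n * x⁻¹

theorem StrictMorphism.ext' {N₁ M₁ N₂ M₂ : Type*} [Group N₁] [Group M₁] [Group N₂] [Group M₂]
    {C₁ : CrossedModule N₁ M₁} {C₂ : CrossedModule N₂ M₂} {F G : StrictMorphism C₁ C₂}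
    (h₁ : F.f₁ = G.f₁) (h₂ : F.f₂ = G.f₂) : F = G := by
  cases F; cases G; simp_all

/-- Split butterflies correspond to strict morphisms of crossed modules.
(1) Every strict morphism `F = (f₁, f₂) : C₁ → C₂` gives rise to a split butterfly whose middle
group is the semidirect product `N₂ ⋊ M₁` (via `m ↦ C₂.act (f₁ m)`), with multiplication
`(n, m) * (n', m') = (n * {}^{f₁ m} n', m * m')`.
(2) Conversely, every butterfly split by a section `s : M₁ →* E` corresponds to a unique strict
morphism `(f₁, f₂)`, characterized by `f₁ = t ∘ s` and `s (h₁ n) = f n * k (f₂ n)`. -/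
theorem stmt_19 {N₁ M₁ N₂ M₂ : Type*} [Group N₁] [Group M₁] [Group N₂] [Group M₂]
    (C₁ : CrossedModule N₁ M₁) (C₂ : CrossedModule N₂ M₂) :
    (∀ F : StrictMorphism C₁ C₂,
      ∃ B : Butterfly C₁ C₂ (N₂ ⋊[C₂.act.comp F.f₁] M₁),
        (∀ n : N₂, B.k n = ⟨n, 1⟩) ∧ (∀ nm : N₂ ⋊[C₂.act.comp F.f₁] M₁, B.g nm = nm.right) ∧
        ∃ s : M₁ →* N₂ ⋊[C₂.act.comp F.f₁] M₁, B.g.comp s = MonoidHom.id M₁) ∧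
    (∀ (E : Type*) [Group E] (B : Butterfly C₁ C₂ E) (s : M₁ →* E),
      B.g.comp s = MonoidHom.id M₁ →
      ∃! F : StrictMorphism C₁ C₂,
        F.f₁ = B.t.comp s ∧ ∀ n : N₁, s (C₁.h n) = B.f n * B.k (F.f₂ n)) := by
  constructor
  · -- Part (1)
    intro F
    set φ : M₁ →* MulAut N₂ := C₂.act.comp F.f₁ with hφ
    -- the NW-SE map f
    have hconj : ∀ (n : N₁) (x : N₂), φ (C₁.h n) x = F.f₂ n * x * (F.f₂ n)⁻¹ := by
      intro n x
      simp only [hφ, MonoidHom.comp_apply, ← F.comm, C₂.peiffer₂]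
    let fB : N₁ →* N₂ ⋊[φ] M₁ := MonoidHom.mk' (fun n => ⟨(F.f₂ n)⁻¹, C₁.h n⟩) (by
      intro n n'
      ext
      · show (F.f₂ (n * n'))⁻¹ = (F.f₂ n)⁻¹ * φ (C₁.h n) (F.f₂ n')⁻¹
        rw [hconj]
        group
        simp [map_mul, mul_assoc]
      · show C₁.h (n * n') = C₁.h n * C₁.h n'
        simp)
    have htlift : ∀ m : M₁, C₂.h.comp (φ m).toMonoidHom
        = (MulAut.conj (F.f₁ m)).toMonoidHom.comp C₂.h := by
      intro m; ext x
      simp [hφ, C₂.peiffer₁]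
    let tB : N₂ ⋊[φ] M₁ →* M₂ := SemidirectProduct.lift C₂.h F.f₁ htlift
    refine ⟨{ f := fB, g := SemidirectProduct.rightHom, k := SemidirectProduct.inl, t := tB
              comm_g_f := fun n => rfl
              comm_t_k := fun n => by simp [tB]
              complex_NWSE := fun n => by
                show tB ⟨(F.f₂ n)⁻¹, C₁.h n⟩ = 1
                rw [SemidirectProduct.mk_eq_inl_mul_inr, map_mul]
                simp [tB, F.comm n]
              k_inj := SemidirectProduct.inl_injective
              g_surj := SemidirectProduct.rightHom_surjective
              ex := fun x => by
                constructor
                · intro hx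
                  exact ⟨x.left, by ext <;> simp_all [SemidirectProduct.rightHom]⟩
                · rintro ⟨y, rfl⟩; simp
              equivar_t := fun x n => by
                rcases x with ⟨a, m⟩
                rw [show (⟨a, m⟩ : N₂ ⋊[φ] M₁) = SemidirectProduct.inl a * SemidirectProduct.inr m
                  from SemidirectProduct.mk_eq_inl_mul_inr m a]
                rw [map_mul]
                simp only [tB, SemidirectProduct.lift_inl, SemidirectProduct.lift_inr, map_mul]
                rw [mul_inv_rev, MulAut.mul_apply, C₂.peiffer₂]
                rw [map_mul, map_mul, map_inv]
                rw [show (SemidirectProduct.inl ((C₂.act (F.f₁ m) : MulAut N₂) n) : N₂ ⋊[φ] M₁)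
                    = SemidirectProduct.inr m * SemidirectProduct.inl n
                      * SemidirectProduct.inr m⁻¹ from by
                  rw [← SemidirectProduct.inl_aut]; rfl]
                group
                simp only [map_zpow]
              equivar_g := fun x n => by
                rcases x with ⟨a, m⟩
                have hx : (⟨a, m⟩ : N₂ ⋊[φ] M₁).right = m := rfl
                show fB (C₁.act ((⟨a, m⟩ : N₂ ⋊[φ] M₁)).right n) = _
                rw [hx]
                have h1 : fB (C₁.act m n) = ⟨(F.f₂ (C₁.act m n))⁻¹, C₁.h (C₁.act m n)⟩ := rfl
                have h2 : fB n = ⟨(F.f₂ n)⁻¹, C₁.h n⟩ := rfl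
                rw [h1, h2]
                ext
                · show (F.f₂ (C₁.act m n))⁻¹
                    = (⟨a, m⟩ * (⟨(F.f₂ n)⁻¹, C₁.h n⟩ : N₂ ⋊[φ] M₁) * (⟨a, m⟩ : N₂ ⋊[φ] M₁)⁻¹).left
                  rw [SemidirectProduct.mul_left, SemidirectProduct.mul_left,
                    SemidirectProduct.inv_left, SemidirectProduct.mul_right]
                  simp only [hx, F.equivar, map_inv, map_mul, MulAut.mul_apply, hconj,
                    MulAut.apply_inv_self]
                  group
                  rfl
                · show C₁.h (C₁.act m n)
                    = (⟨a, m⟩ * (⟨(F.f₂ n)⁻¹, C₁.h n⟩ : N₂ ⋊[φ] M₁) * (⟨a, m⟩ : N₂ ⋊[φ] M₁)⁻¹).right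
                  rw [SemidirectProduct.mul_right, SemidirectProduct.mul_right,
                    SemidirectProduct.inv_right, C₁.peiffer₁]
              }, fun n => rfl, fun nm => rfl,
            SemidirectProduct.inr, SemidirectProduct.rightHom_comp_inr⟩
  · -- Part (2)
    intro E _ B s hs
    have hgs : ∀ m : M₁, B.g (s m) = m := fun m => congrArg (fun f => f m) hs
    -- trivial conjugation by elements killed by t
    have hconj0 : ∀ (e : E), B.t e = 1 → ∀ y : N₂, e * B.k y * e⁻¹ = B.k y := by
      intro e he y
      rw [← B.equivar_t, he, map_one]; rfl
    -- define f₂ pointwise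
    have hmem : ∀ n : N₁, (B.f n)⁻¹ * s (C₁.h n) ∈ B.k.range := by
      intro n
      rw [← B.ex, map_mul, map_inv, B.comm_g_f, hgs, inv_mul_cancel]
    choose f₂fun hf₂ using fun n => hmem n
    have hk : ∀ n, B.k (f₂fun n) = (B.f n)⁻¹ * s (C₁.h n) := hf₂
    have key : ∀ n, s (C₁.h n) = B.f n * B.k (f₂fun n) := by
      intro n; rw [hk]; group
    let f₂ : N₁ →* N₂ := MonoidHom.mk' f₂fun (by
      intro n n'
      apply B.k_inj
      show B.k (f₂fun (n * n')) = B.k (f₂fun n * f₂fun n')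
      rw [map_mul B.k, hk, hk, hk]
      simp only [map_mul]
      calc (B.f n * B.f n')⁻¹ * (s (C₁.h n) * s (C₁.h n'))
          = (B.f n')⁻¹ * ((B.f n)⁻¹ * s (C₁.h n)) * (B.f n')⁻¹⁻¹
            * ((B.f n')⁻¹ * s (C₁.h n')) := by group
        _ = _ := by
            rw [← hk n, ← hk n', hconj0 (B.f n')⁻¹ (by rw [map_inv, B.complex_NWSE, inv_one])])
    refine ⟨{ f₁ := B.t.comp s, f₂ := f₂
              comm := fun n => by
                have := congrArg B.t (hk n)
                rw [B.comm_t_k, map_mul, map_inv, B.complex_NWSE, inv_one, one_mul] at this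
                exact this
              equivar := fun m n => by
                apply B.k_inj
                have hsm : B.g (s m) = m := hgs m
                have e1 : B.f (C₁.act m n) = s m * B.f n * (s m)⁻¹ := by
                  have := B.equivar_g (s m) n; rwa [hsm] at this
                have e2 : C₁.h (C₁.act m n) = m * C₁.h n * m⁻¹ := C₁.peiffer₁ m n
                show B.k (f₂fun (C₁.act m n)) = B.k (C₂.act (B.t (s m)) (f₂fun n))
                rw [B.equivar_t (s m), hk, hk, e1, e2]
                simp only [map_mul, map_inv]
                group }, ⟨rfl, key⟩, ?_⟩
    rintro G ⟨hG1, hG2⟩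
    refine StrictMorphism.ext' hG1 ?_
    ext n
    apply B.k_inj
    show B.k (G.f₂ n) = B.k (f₂fun n)
    rw [hk, hG2 n]
    group
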